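/- arXiv:math/0005025 — 2 statements merged into one kernel-verified Lean document; each statement's English description precedes it below -/
import Mathlib

section
/- Let Φ be a crystallographic root system with no G₂ factor, let ω be a short root of squared length l², and suppose M·ω = Σⱼ dⱼ αⱼ with positive integers dⱼ, Σⱼ dⱼ ≤ M, and αⱼ ∈ Φ with αⱼ ≠ ω for all j. Then every αⱼ is long with F(αⱼ, ω) = l², and there exist indices j₀, j₁ such that αⱼ₀ + αⱼ₁ = 2ω. -/
open RealInnerProductSpace

/-- In a crystallographic root system with no `G₂` factor (every root has squared length
`l²` or `2l²`, where `l²` is the squared length of the short root `ω`), if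
`M • ω = ∑ⱼ dⱼ • αⱼ` with `dⱼ > 0`, `∑ dⱼ ≤ M` and `αⱼ ∈ Φ`, `αⱼ ≠ ω` for all `j`,
then every `αⱼ` is long with `F(αⱼ, ω) = l²`, and two of them sum to `2ω`. -/
theorem stmt_11 {V : Type*} [NormedAddCommGroup V] [InnerProductSpace ℝ V]
    (Φ : Finset V)
    (h0 : (0 : V) ∉ Φ)
    (hsym : ∀ α ∈ Φ, -α ∈ Φ)
    (hcrys : ∀ α ∈ Φ, ∀ β ∈ Φ, ∃ n : ℤ, 2 * ⟪α, β⟫ = (n : ℝ) * ⟪β, β⟫)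
    (hrefl : ∀ α ∈ Φ, ∀ β ∈ Φ, β - (2 * ⟪β, α⟫ / ⟪α, α⟫) • α ∈ Φ)
    (hred : ∀ α ∈ Φ, ∀ c : ℝ, c • α ∈ Φ → c = 1 ∨ c = -1)
    (ω : V) (hω : ω ∈ Φ)
    -- `ω` is short and there is no `G₂` factor: every root has squared length `l²` or `2l²`
    (hlen : ∀ β ∈ Φ, ⟪β, β⟫ = ⟪ω, ω⟫ ∨ ⟪β, β⟫ = 2 * ⟪ω, ω⟫)
    (n : ℕ) (α : Fin n → V) (hα : ∀ j, α j ∈ Φ) (hne : ∀ j, α j ≠ ω)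
    (d : Fin n → ℕ) (hd : ∀ j, 0 < d j)
    (M : ℕ) (hM : 0 < M)
    (hsum : ∑ j, d j ≤ M)
    (heq : (M : ℝ) • ω = ∑ j, (d j : ℝ) • α j) :
    (∀ j, ⟪α j, α j⟫ = 2 * ⟪ω, ω⟫ ∧ ⟪α j, ω⟫ = ⟪ω, ω⟫) ∧
    ∃ j₀ j₁, α j₀ + α j₁ = (2 : ℝ) • ω := by
  have hω0 : ω ≠ 0 := fun h => h0 (h ▸ hω)
  have hl : 0 < ⟪ω, ω⟫ := lt_of_le_of_ne real_inner_self_nonneg (fun h => hω0 (inner_self_eq_zero.mp h.symm))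
  set l : ℝ := ⟪ω, ω⟫ with hl_def
  -- inner product of `heq` with any vector `x`
  have key : ∀ x : V, ∑ j, (d j : ℝ) * ⟪α j, x⟫ = (M : ℝ) * ⟪ω, x⟫ := by
    intro x
    have h1 := congrArg (fun v => ⟪v, x⟫) heq
    simpa [sum_inner, real_inner_smul_left] using h1.symm
  -- upper bound on inner products with ω
  have hbound : ∀ j, ⟪α j, ω⟫ ≤ l := by
    intro j
    obtain ⟨m, hm⟩ := hcrys (α j) (hα j) ω hω
    have hcs : ⟪α j, ω⟫ * ⟪α j, ω⟫ ≤ ⟪α j, α j⟫ * l :=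
      real_inner_mul_inner_self_le _ _
    have hαα : ⟪α j, α j⟫ ≤ 2 * l := by
      rcases hlen (α j) (hα j) with h | h <;> rw [h] <;> nlinarith
    have hp : ⟪α j, ω⟫ = (m : ℝ) * l / 2 := by linarith
    have hsq : ((m : ℝ) * l / 2) * ((m : ℝ) * l / 2) ≤ 2 * l * l := by
      rw [← hp]; nlinarith
    have hm8 : (m : ℝ) ^ 2 ≤ 8 := by nlinarith [mul_pos hl hl]
    have hm8' : m ^ 2 ≤ 8 := by exact_mod_cast hm8
    have hm2 : m ≤ 2 := by nlinarith
    have hm2' : (m : ℝ) ≤ 2 := by exact_mod_cast hm2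
    nlinarith
  have hk := key ω
  have hterm : ∀ j, (d j : ℝ) * (l - ⟪α j, ω⟫) = 0 := by
    have h1 : ∑ j, (d j : ℝ) * (l - ⟪α j, ω⟫)
        = (∑ j, (d j : ℝ)) * l - (M : ℝ) * l := by
      rw [← hk, Finset.sum_mul, ← Finset.sum_sub_distrib]
      exact Finset.sum_congr rfl fun j _ => by ring
    have h2 : (∑ j, (d j : ℝ)) ≤ (M : ℝ) := by exact_mod_cast hsum
    have hsum0 : ∑ j, (d j : ℝ) * (l - ⟪α j, ω⟫) ≤ 0 := by
      rw [h1]; nlinarith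
    have hnonneg : ∀ j ∈ Finset.univ, 0 ≤ (d j : ℝ) * (l - ⟪α j, ω⟫) := by
      intro j _
      exact mul_nonneg (by positivity) (sub_nonneg.mpr (hbound j))
    have hzero : ∑ j, (d j : ℝ) * (l - ⟪α j, ω⟫) = 0 :=
      le_antisymm hsum0 (Finset.sum_nonneg hnonneg)
    intro j
    exact (Finset.sum_eq_zero_iff_of_nonneg hnonneg).mp hzero j (Finset.mem_univ j)
  have hpl : ∀ j, ⟪α j, ω⟫ = l := by
    intro j
    have h := hterm j
    have hdj : (0 : ℝ) < (d j : ℝ) := by exact_mod_cast hd j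
    have := mul_eq_zero.mp h
    rcases this with h | h
    · exact absurd h (ne_of_gt hdj)
    · linarith [sub_eq_zero.mp h]
  have hlong : ∀ j, ⟪α j, α j⟫ = 2 * l := by
    intro j
    rcases hlen (α j) (hα j) with h | h
    · exfalso
      apply hne j
      have hv : ⟪α j - ω, α j - ω⟫ = 0 := by
        have h1 := hpl j
        have h2 : ⟪ω, α j⟫ = l := by rw [real_inner_comm]; exact h1
        simp only [inner_sub_left, inner_sub_right]
        rw [h, h1, h2]; ring
      have := inner_self_eq_zero.mp hv
      exact sub_eq_zero.mp this
    · exact h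
  refine ⟨fun j => ⟨hlong j, hpl j⟩, ?_⟩
  -- n is positive
  rcases Nat.eq_zero_or_pos n with hn | hn
  · exfalso
    subst hn
    simp only [Finset.univ_eq_empty, Finset.sum_empty] at heq
    have hM0 : (M : ℝ) ≠ 0 := by positivity
    exact hω0 ((smul_eq_zero.mp heq).resolve_left hM0)
  set j₀ : Fin n := ⟨0, hn⟩ with hj₀
  have hMd : (∑ j, (d j : ℝ)) = (M : ℝ) := by
    have h1 : ∑ j, (d j : ℝ) * ⟪α j, ω⟫ = (∑ j, (d j : ℝ)) * l := by
      rw [Finset.sum_mul]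
      exact Finset.sum_congr rfl fun j _ => by rw [hpl j]
    rw [h1] at hk
    exact mul_right_cancel₀ (ne_of_gt hl) hk
  -- find j₁ with nonpositive inner product with α j₀
  have hex : ∃ j₁, ⟪α j₁, α j₀⟫ ≤ 0 := by
    by_contra hcon
    push_neg at hcon
    have hge : ∀ j, l ≤ ⟪α j, α j₀⟫ := by
      intro j
      obtain ⟨m, hm⟩ := hcrys (α j) (hα j) (α j₀) (hα j₀)
      rw [hlong j₀] at hm
      have hmpos : (0 : ℝ) < (m : ℝ) := by nlinarith [hcon j]
      have : (1 : ℤ) ≤ m := by exact_mod_cast hmpos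
      have h1 : (1 : ℝ) ≤ (m : ℝ) := by exact_mod_cast this
      nlinarith
    have hlt : ∑ j, (d j : ℝ) * l < ∑ j, (d j : ℝ) * ⟪α j, α j₀⟫ := by
      apply Finset.sum_lt_sum
      · intro j _
        exact mul_le_mul_of_nonneg_left (hge j) (by positivity)
      · refine ⟨j₀, Finset.mem_univ _, ?_⟩
        have hdj : (1 : ℝ) ≤ (d j₀ : ℝ) := by exact_mod_cast hd j₀
        rw [hlong j₀]
        nlinarith
    rw [← Finset.sum_mul, hMd, key (α j₀), real_inner_comm, hpl j₀] at hlt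
    exact lt_irrefl _ hlt
  obtain ⟨j₁, hq⟩ := hex
  refine ⟨j₀, j₁, ?_⟩
  have hq' : ⟪α j₀, α j₁⟫ ≤ 0 := by rw [real_inner_comm]; exact hq
  have hc0 : ⟪ω, α j₀⟫ = l := by rw [real_inner_comm]; exact hpl j₀
  have hc1 : ⟪ω, α j₁⟫ = l := by rw [real_inner_comm]; exact hpl j₁
  have hvv : ⟪α j₀ + α j₁ - (2 : ℝ) • ω, α j₀ + α j₁ - (2 : ℝ) • ω⟫ ≤ 0 := by
    simp only [inner_sub_left, inner_sub_right, inner_add_left, inner_add_right,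
      real_inner_smul_left, real_inner_smul_right]
    rw [hlong j₀, hlong j₁, hpl j₀, hpl j₁, hc0, hc1, ← hl_def]
    linarith
  have hvz : α j₀ + α j₁ - (2 : ℝ) • ω = 0 :=
    inner_self_eq_zero.mp (le_antisymm hvv real_inner_self_nonneg)
  exact sub_eq_zero.mp hvz
end

section
/- Let Φ be a root system, α a positive root, y an element of the Weyl group W, and ℓ a positive integer. Suppose S ⊆ Φ is a set of ℓ roots all lying on a single α-root-string (i.e., S ⊆ {β₀ + kα : k ∈ ℤ} for some β₀) and y⁻¹(γ) < 0 for all γ ∈ S. Then there is a unique root β on this α-string such that y⁻¹(β − ℓα) is not a negative root (or β − ℓα ∉ Φ) while y⁻¹(β − kα) < 0 for all 0 ≤ k ≤ ℓ−1; consequently the set S* = {β, β−α, …, β−(ℓ−1)α} is the unique 'maximal downward-closed' ℓ-element segment of the string whose image under y⁻¹ consists of negative roots. -/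
open RealInnerProductSpace

theorem aux_add {V : Type*} [NormedAddCommGroup V] [InnerProductSpace ℝ V]
    (Φ : Finset V) (h0 : (0:V) ∉ Φ)
    (hcrys : ∀ α ∈ Φ, ∀ β ∈ Φ, ∃ n : ℤ, 2 * ⟪α, β⟫ = (n : ℝ) * ⟪β, β⟫)
    (hrefl : ∀ α ∈ Φ, ∀ β ∈ Φ, β - (2 * ⟪β, α⟫ / ⟪α, α⟫) • α ∈ Φ)
    (δ : V) (hδ : δ ∈ Φ) (γ : V) (hγ : γ ∈ Φ) (hneg : ⟪γ, δ⟫ < 0) :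
    γ + δ ∈ Φ ∨ γ = -δ := by
  have hδ0 : δ ≠ 0 := fun h => h0 (h ▸ hδ)
  have hγ0 : γ ≠ 0 := fun h => h0 (h ▸ hγ)
  have hpos : ∀ v : V, v ≠ 0 → 0 < ⟪v, v⟫ := fun v hv =>
    lt_of_le_of_ne real_inner_self_nonneg (fun h => hv (inner_self_eq_zero.mp h.symm))
  have htδ : 0 < ⟪δ, δ⟫ := hpos δ hδ0
  have htγ : 0 < ⟪γ, γ⟫ := hpos γ hγ0
  obtain ⟨n, hn⟩ := hcrys γ hγ δ hδ
  obtain ⟨m, hm⟩ := hcrys δ hδ γ hγ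
  rw [real_inner_comm γ δ] at hm
  have hnneg : (n:ℝ) < 0 := by nlinarith
  have hmneg : (m:ℝ) < 0 := by nlinarith
  have hnint : n < 0 := by exact_mod_cast hnneg
  have hmint : m < 0 := by exact_mod_cast hmneg
  have hn1 : n = -1 ∨ (n:ℝ) ≤ -2 := by
    rcases eq_or_ne n (-1) with h | h
    · exact Or.inl h
    · right; exact_mod_cast (by omega : n ≤ -2)
  have hm1 : m = -1 ∨ (m:ℝ) ≤ -2 := by
    rcases eq_or_ne m (-1) with h | h
    · exact Or.inl h
    · right; exact_mod_cast (by omega : m ≤ -2)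
  rcases hn1 with h | hn2
  · left
    have hr := hrefl δ hδ γ hγ
    have hc : 2 * ⟪γ, δ⟫ / ⟪δ, δ⟫ = (-1:ℝ) := by
      rw [hn, h]; push_cast; field_simp
    rw [hc] at hr
    simpa [neg_one_smul, sub_neg_eq_add] using hr
  rcases hm1 with h | hm2
  · left
    have hr := hrefl γ hγ δ hδ
    have hc : 2 * ⟪δ, γ⟫ / ⟪γ, γ⟫ = (-1:ℝ) := by
      rw [real_inner_comm γ δ, hm, h]; push_cast; field_simp
    rw [hc] at hr
    have : δ + γ ∈ Φ := by simpa [neg_one_smul, sub_neg_eq_add] using hr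
    simpa [add_comm] using this
  · right
    have h1 : ⟪γ, δ⟫ ≤ -⟪δ, δ⟫ := by nlinarith
    have h2 : ⟪γ, δ⟫ ≤ -⟪γ, γ⟫ := by nlinarith
    have h3 : ⟪γ + δ, γ + δ⟫ ≤ 0 := by
      rw [real_inner_add_add_self]; linarith
    have h4 : γ + δ = 0 := by
      have h5 := real_inner_self_nonneg (x := γ + δ)
      have : ⟪γ + δ, γ + δ⟫ = 0 := le_antisymm h3 h5
      exact_mod_cast inner_self_eq_zero.mp (by exact_mod_cast this)
    exact eq_neg_of_add_eq_zero_left h4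


/-- Root-string lemma: if `S` is a set of `ℓ` roots all lying on a single `α`-string
and `y⁻¹(γ)` is a negative root for all `γ ∈ S`, then there is a unique root `β`
on this string such that `y⁻¹(β − kα)` is a negative root for all `0 ≤ k ≤ ℓ−1`,
while `β − ℓα` is not a root or `y⁻¹(β − ℓα)` is not negative.  The segment
`S* = {β, β−α, …, β−(ℓ−1)α}` is then the unique such `ℓ`-element segment of the
string. -/
theorem stmt_13 {V : Type*} [NormedAddCommGroup V] [InnerProductSpace ℝ V]
    (Φ : Finset V)
    (h0 : (0 : V) ∉ Φ)
    (hsym : ∀ α ∈ Φ, -α ∈ Φ)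
    (hcrys : ∀ α ∈ Φ, ∀ β ∈ Φ, ∃ n : ℤ, 2 * ⟪α, β⟫ = (n : ℝ) * ⟪β, β⟫)
    (hrefl : ∀ α ∈ Φ, ∀ β ∈ Φ, β - (2 * ⟪β, α⟫ / ⟪α, α⟫) • α ∈ Φ)
    (hred : ∀ α ∈ Φ, ∀ c : ℝ, c • α ∈ Φ → c = 1 ∨ c = -1)
    -- a system of positive roots
    (Φpos : Set V) (hposΦ : Φpos ⊆ Φ)
    (hpm : ∀ γ ∈ Φ, (γ ∈ Φpos ∧ -γ ∉ Φpos) ∨ (γ ∉ Φpos ∧ -γ ∈ Φpos))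
    (hadd : ∀ γ ∈ Φpos, ∀ δ ∈ Φpos, γ + δ ∈ (Φ : Set V) → γ + δ ∈ Φpos)
    -- a positive root α and a Weyl group element y (a linear automorphism preserving Φ)
    (α : V) (hα : α ∈ Φpos)
    (y : V ≃ₗ[ℝ] V) (hy : ∀ v : V, v ∈ Φ ↔ y v ∈ Φ)
    (ℓ : ℕ) (hℓ : 0 < ℓ)
    (β₀ : V) (S : Finset V)
    (hScard : S.card = ℓ)
    (hSΦ : ↑S ⊆ (Φ : Set V))
    (hstring : ∀ γ ∈ S, ∃ k : ℤ, γ = β₀ + k • α)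
    (hSneg : ∀ γ ∈ S, -(y.symm γ) ∈ Φpos) :
    ∃! β : V,
      (∃ k : ℤ, β = β₀ + k • α) ∧
      (∀ k : ℕ, k < ℓ → (β - (k : ℤ) • α ∈ Φ ∧ -(y.symm (β - (k : ℤ) • α)) ∈ Φpos)) ∧
      ¬(β - (ℓ : ℤ) • α ∈ Φ ∧ -(y.symm (β - (ℓ : ℤ) • α)) ∈ Φpos) := by
    classical
  have hαΦ : α ∈ Φ := hposΦ hα
  have hα0 : α ≠ 0 := fun h => h0 (h ▸ hαΦ)
  have hαpos : 0 < ⟪α, α⟫ := lt_of_le_of_ne real_inner_self_nonneg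
    (fun h => hα0 (inner_self_eq_zero.mp h.symm))
  have hyΦ : ∀ v : V, v ∈ Φ ↔ y.symm v ∈ Φ := by
    intro v
    conv_lhs => rw [← y.apply_symm_apply v]
    exact (hy _).symm
  set α' := y.symm α with hα'def
  have hα'Φ : α' ∈ Φ := (hyΦ α).mp hαΦ
  -- algebraic rewriting helpers
  have hre : ∀ a b : ℤ, β₀ + a • α - b • α = β₀ + (a - b) • α := by
    intro a b; rw [sub_zsmul]; abel
  have hre1 : ∀ a : ℤ, β₀ + a • α + α = β₀ + (a + 1) • α := by
    intro a; rw [add_zsmul, one_zsmul]; abel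
  have hre2 : ∀ a : ℤ, β₀ + a • α - α = β₀ + (a - 1) • α := by
    intro a; rw [sub_zsmul, one_zsmul]; abel
  -- injectivity of k ↦ β₀ + k • α
  have hinj : ∀ k j : ℤ, β₀ + k • α = β₀ + j • α → k = j := by
    intro k j h
    have h1 : (k - j) • α = 0 := by
      rw [sub_zsmul, add_left_cancel h]; abel
    rw [← Int.cast_smul_eq_zsmul ℝ] at h1
    rcases smul_eq_zero.mp h1 with h2 | h2
    · have h3 : k - j = 0 := by exact_mod_cast h2
      omega
    · exact absurd h2 hα0
  set g : V → ℤ := fun v => if h : ∃ k : ℤ, v = β₀ + k • α then h.choose else 0 with hgdef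
  have hg : ∀ k : ℤ, g (β₀ + k • α) = k := by
    intro k
    have hex : ∃ j : ℤ, β₀ + k • α = β₀ + j • α := ⟨k, rfl⟩
    have hsp := hex.choose_spec
    simp only [hgdef, dif_pos hex]
    exact (hinj k hex.choose hsp).symm
  set P : ℤ → Prop := fun k => β₀ + k • α ∈ Φ ∧ -(y.symm (β₀ + k • α)) ∈ Φpos with hPdef
  set Kset : Finset ℤ := (Φ.image g).filter P with hKdef
  have hK : ∀ k : ℤ, k ∈ Kset ↔ P k := by
    intro k
    constructor
    · intro hk; exact (Finset.mem_filter.mp hk).2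
    · intro hk
      exact Finset.mem_filter.mpr ⟨Finset.mem_image.mpr ⟨β₀ + k • α, hk.1, hg k⟩, hk⟩
  have hSrep : ∀ γ ∈ S, γ = β₀ + (g γ) • α := by
    intro γ hγ
    obtain ⟨k, hk⟩ := hstring γ hγ
    rw [hk, hg]
  have hSsub : S.image g ⊆ Kset := by
    intro k hk
    obtain ⟨γ, hγS, rfl⟩ := Finset.mem_image.mp hk
    refine (hK _).mpr ⟨?_, ?_⟩
    · rw [← hSrep γ hγS]; simpa using hSΦ hγS
    · rw [← hSrep γ hγS]; exact hSneg γ hγS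
  have hcard : ℓ ≤ Kset.card := by
    have h1 : (S.image g).card = ℓ := by
      rw [Finset.card_image_of_injOn, hScard]
      intro a ha b hb hab
      rw [hSrep a (by simpa using ha), hab, ← hSrep b (by simpa using hb)]
    calc ℓ = (S.image g).card := h1.symm
      _ ≤ Kset.card := Finset.card_le_card hSsub
  have hne : Kset.Nonempty := Finset.card_pos.mp (lt_of_lt_of_le hℓ hcard)
  set m := Kset.min' hne with hmdef
  set M := Kset.max' hne with hMdef
  have hmK : P m := (hK m).mp (Kset.min'_mem hne)
  have hMK : P M := (hK M).mp (Kset.max'_mem hne)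
  have hmM : m ≤ M := Kset.min'_le _ (Kset.max'_mem hne)
  have hL : ∀ δ ∈ Φ, ∀ γ ∈ Φ, ⟪γ, δ⟫ < 0 → γ + δ ∈ Φ ∨ γ = -δ :=
    fun δ hδ γ hγ => aux_add Φ h0 hcrys hrefl δ hδ γ hγ
  -- the degenerate-case contradiction: the string cannot pass through 0
  have hzero : ∀ (j k c : ℤ), P j → P k → j < k → β₀ + c • α = 0 → False := by
    intro j k c hj hk hjk hc
    have hβ : β₀ = (-c) • α := by rw [neg_zsmul]; exact eq_neg_of_add_eq_zero_left hc
    have hrepc : ∀ i : ℤ, β₀ + i • α = (i - c) • α := by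
      intro i
      rw [hβ, ← add_zsmul]
      congr 1
      ring
    have hval : ∀ i : ℤ, P i → (i - c = 1 ∨ i - c = -1) := by
      intro i hi
      have h2 : ((i - c : ℤ) : ℝ) • α ∈ Φ := by
        rw [Int.cast_smul_eq_zsmul, ← hrepc]
        exact hi.1
      rcases hred α hαΦ _ h2 with h | h
      · left; exact_mod_cast h
      · right; exact_mod_cast h
    rcases hval j hj with hj1 | hj1 <;> rcases hval k hk with hk1 | hk1
    · omega
    · omega
    · have hjα : β₀ + j • α = -α := by
        rw [hrepc, hj1]; simp
      have hkα : β₀ + k • α = α := by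
        rw [hrepc, hk1]; simp
      have h1 : α' ∈ Φpos := by
        have := hj.2; rw [hjα] at this; simpa [hα'def] using this
      have h2 : -α' ∈ Φpos := by
        have := hk.2; rw [hkα] at this; simpa [hα'def] using this
      rcases hpm α' hα'Φ with ⟨_, h⟩ | ⟨h, _⟩
      · exact h h2
      · exact h h1
    · omega
  -- unbrokenness of the string between two elements of K
  have hTmid : ∀ j i k : ℤ, P j → P k → j ≤ i → i ≤ k → β₀ + i • α ∈ Φ := by
    intro j i k hj hk hji hik
    by_contra hiΦ
    have hji' : j < i := lt_of_le_of_ne hji (fun h => hiΦ (h ▸ hj.1))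
    have hik' : i < k := lt_of_le_of_ne hik (fun h => hiΦ (h ▸ hk.1))
    set A := (Finset.Icc j i).filter (fun x => β₀ + x • α ∈ Φ) with hA
    have hjA : j ∈ A := Finset.mem_filter.mpr ⟨Finset.mem_Icc.mpr ⟨le_refl j, hji⟩, hj.1⟩
    have hAne : A.Nonempty := ⟨j, hjA⟩
    set u := A.max' hAne with hu
    have huA := A.max'_mem hAne
    have huIcc := (Finset.mem_filter.mp huA).1
    have huΦ : β₀ + u • α ∈ Φ := (Finset.mem_filter.mp huA).2
    have huj : j ≤ u := (Finset.mem_Icc.mp huIcc).1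
    have hui : u < i := lt_of_le_of_ne (Finset.mem_Icc.mp huIcc).2 (fun h => hiΦ (h ▸ huΦ))
    have hu1 : β₀ + (u + 1) • α ∉ Φ := by
      intro hmem
      have h1 : u + 1 ∈ A :=
        Finset.mem_filter.mpr ⟨Finset.mem_Icc.mpr ⟨by omega, by omega⟩, hmem⟩
      have := A.le_max' _ h1
      omega
    set B := (Finset.Icc i k).filter (fun x => β₀ + x • α ∈ Φ) with hB
    have hkB : k ∈ B := Finset.mem_filter.mpr ⟨Finset.mem_Icc.mpr ⟨hik, le_refl k⟩, hk.1⟩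
    have hBne : B.Nonempty := ⟨k, hkB⟩
    set v := B.min' hBne with hv
    have hvB := B.min'_mem hBne
    have hvIcc := (Finset.mem_filter.mp hvB).1
    have hvΦ : β₀ + v • α ∈ Φ := (Finset.mem_filter.mp hvB).2
    have hvk : v ≤ k := (Finset.mem_Icc.mp hvIcc).2
    have hiv : i < v :=
      lt_of_le_of_ne (Finset.mem_Icc.mp hvIcc).1 (fun h => hiΦ (by rw [h]; exact hvΦ))
    have hv1 : β₀ + (v - 1) • α ∉ Φ := by
      intro hmem
      have h1 : v - 1 ∈ B :=
        Finset.mem_filter.mpr ⟨Finset.mem_Icc.mpr ⟨by omega, by omega⟩, hmem⟩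
      have := B.min'_le _ h1
      omega
    rcases lt_or_ge ⟪β₀ + u • α, α⟫ 0 with hc1 | hc1
    · rcases hL α hαΦ _ huΦ hc1 with h | h
      · exact hu1 (by rw [← hre1]; exact h)
      · exact hzero j k (u + 1) hj hk (by omega) (by rw [← hre1, h, neg_add_cancel])
    · rcases lt_or_ge ⟪β₀ + v • α, -α⟫ 0 with hc2 | hc2
      · rcases hL (-α) (hsym α hαΦ) _ hvΦ hc2 with h | h
        · refine hv1 ?_
          rw [← hre2]
          simpa [sub_eq_add_neg] using h
        · refine hzero j k (v - 1) hj hk (by omega) ?_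
          rw [← hre2, h, neg_neg, sub_self]
      · have hexp : ⟪β₀ + v • α, α⟫ = ⟪β₀ + u • α, α⟫ + ((v - u : ℤ) : ℝ) * ⟪α, α⟫ := by
          have h1 : β₀ + v • α = (β₀ + u • α) + ((v - u : ℤ) : ℝ) • α := by
            rw [Int.cast_smul_eq_zsmul, sub_zsmul]; abel
          rw [h1, inner_add_left, real_inner_smul_left]
        have hvu : (2 : ℝ) ≤ ((v - u : ℤ) : ℝ) := by exact_mod_cast (by omega : (2:ℤ) ≤ v - u)
        rw [inner_neg_right] at hc2
        nlinarith [hαpos]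
  -- membership of negatives of images
  have hΦneg : ∀ k : ℤ, β₀ + k • α ∈ Φ → -(y.symm (β₀ + k • α)) ∈ Φ :=
    fun k hk => hsym _ ((hyΦ _).mp hk)
  have hmap : ∀ k : ℤ, y.symm (β₀ + k • α) = y.symm β₀ + k • α' := by
    intro k; rw [map_add, map_zsmul]
  -- K is an interval
  have hPint : ∀ i : ℤ, m ≤ i → i ≤ M → P i := by
    rcases hpm α' hα'Φ with ⟨hα'p, _⟩ | ⟨_, hα'p⟩
    · -- α' positive: step down from M
      have hstepdn : ∀ x : ℤ, P x → β₀ + (x - 1) • α ∈ Φ → P (x - 1) := by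
        intro x hx hmem
        refine ⟨hmem, ?_⟩
        have he : -(y.symm (β₀ + (x - 1) • α)) = -(y.symm (β₀ + x • α)) + α' := by
          rw [hmap, hmap, sub_zsmul, one_zsmul]; abel
        rw [he]
        refine hadd _ hx.2 _ hα'p ?_
        rw [← he]
        exact Finset.mem_coe.mpr (hΦneg _ hmem)
      have key : ∀ d : ℕ, m ≤ M - (d : ℤ) → P (M - (d : ℤ)) := by
        intro d
        induction d with
        | zero => intro _; simpa using hMK
        | succ d ih =>
          intro hd
          have hd1 : ((d + 1 : ℕ) : ℤ) = (d : ℤ) + 1 := by push_cast; ring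
          rw [hd1] at hd ⊢
          have hd' : m ≤ M - (d : ℤ) := by omega
          have hPd := ih hd'
          have hmem : β₀ + (M - (d : ℤ) - 1) • α ∈ Φ :=
            hTmid m (M - (d : ℤ) - 1) M hmK hMK (by omega) (by omega)
          have h2 := hstepdn _ hPd hmem
          have h3 : M - ((d : ℤ) + 1) = M - (d : ℤ) - 1 := by ring
          rw [h3]
          exact h2
      intro i him hiM
      have h1 : P (M - ((M - i).toNat : ℤ)) := key _ (by omega)
      have hc : ((M - i).toNat : ℤ) = M - i := Int.toNat_of_nonneg (by omega)
      rw [hc, sub_sub_cancel] at h1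
      exact h1
    · -- α' negative: step up from m
      have hstepup : ∀ x : ℤ, P x → β₀ + (x + 1) • α ∈ Φ → P (x + 1) := by
        intro x hx hmem
        refine ⟨hmem, ?_⟩
        have he : -(y.symm (β₀ + (x + 1) • α)) = -(y.symm (β₀ + x • α)) + -α' := by
          rw [hmap, hmap, add_zsmul, one_zsmul]; abel
        rw [he]
        refine hadd _ hx.2 _ hα'p ?_
        rw [← he]
        exact Finset.mem_coe.mpr (hΦneg _ hmem)
      have key : ∀ d : ℕ, m + (d : ℤ) ≤ M → P (m + (d : ℤ)) := by
        intro d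
        induction d with
        | zero => intro _; simpa using hmK
        | succ d ih =>
          intro hd
          have hd1 : ((d + 1 : ℕ) : ℤ) = (d : ℤ) + 1 := by push_cast; ring
          rw [hd1] at hd ⊢
          have hd' : m + (d : ℤ) ≤ M := by omega
          have hPd := ih hd'
          have hmem : β₀ + (m + (d : ℤ) + 1) • α ∈ Φ :=
            hTmid m (m + (d : ℤ) + 1) M hmK hMK (by omega) (by omega)
          have h2 := hstepup _ hPd hmem
          have h3 : m + ((d : ℤ) + 1) = m + (d : ℤ) + 1 := by ring
          rw [h3]
          exact h2
      intro i him hiM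
      have h1 : P (m + ((i - m).toNat : ℤ)) := key _ (by omega)
      have hc : ((i - m).toNat : ℤ) = i - m := Int.toNat_of_nonneg (by omega)
      rw [hc, add_sub_cancel] at h1
      exact h1
  -- the interval has length at least ℓ
  have hMm : m + (ℓ : ℤ) - 1 ≤ M := by
    have hsub : Kset ⊆ Finset.Icc m M := fun k hk =>
      Finset.mem_Icc.mpr ⟨Kset.min'_le k hk, Kset.le_max' k hk⟩
    have h1 := Finset.card_le_card hsub
    rw [Int.card_Icc] at h1
    have h5 : (Kset.card : ℤ) ≤ ((M + 1 - m).toNat : ℤ) := by exact_mod_cast h1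
    have h4 : ((M + 1 - m).toNat : ℤ) = M + 1 - m := Int.toNat_of_nonneg (by omega)
    have h3 : (ℓ : ℤ) ≤ (Kset.card : ℤ) := by exact_mod_cast hcard
    omega
  -- conclusion
  refine ⟨β₀ + (m + (ℓ : ℤ) - 1) • α, ⟨⟨m + (ℓ : ℤ) - 1, rfl⟩, ?_, ?_⟩, ?_⟩
  · intro k hk
    rw [hre]
    exact hPint _ (by omega) (by omega)
  · rw [hre]
    intro hP
    have h1 : m + (ℓ : ℤ) - 1 - (ℓ : ℤ) = m - 1 := by ring
    rw [h1] at hP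
    have h2 : m - 1 ∈ Kset := (hK _).mpr hP
    have := Kset.min'_le _ h2
    omega
  · rintro β' ⟨⟨k', rfl⟩, h1, h2⟩
    have hP0 : P k' := by
      have h := h1 0 hℓ
      simpa only [Nat.cast_zero, zero_zsmul, sub_zero] using h
    have hPtop : P (k' - (ℓ : ℤ) + 1) := by
      have h := h1 (ℓ - 1) (by omega)
      rw [hre] at h
      have hcast : k' - ((ℓ - 1 : ℕ) : ℤ) = k' - (ℓ : ℤ) + 1 := by
        have : ((ℓ - 1 : ℕ) : ℤ) = (ℓ : ℤ) - 1 := by omega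
        omega
      rw [hcast] at h
      exact h
    have hnotP : ¬ P (k' - (ℓ : ℤ)) := by
      intro hP
      exact h2 (by rw [hre]; exact hP)
    have hk'M : k' ≤ M := Kset.le_max' k' ((hK k').mpr hP0)
    have hk'm : m ≤ k' - (ℓ : ℤ) + 1 := Kset.min'_le _ ((hK _).mpr hPtop)
    have hlow : k' - (ℓ : ℤ) < m := by
      by_contra h
      exact hnotP (hPint _ (by omega) (by omega))
    have hk'eq : k' = m + (ℓ : ℤ) - 1 := by omega
    rw [hk'eq]
end
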